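/- For the one-soliton solution u(x,t) = α e^{iφ} e^{i(α²-β²)t + iεβx} / cosh(α(x - x₀ - 2εβt)), the quantity I₁(t) = ∫₀^∞ |u(x,t)|² dx − sign(x₀ + 2εβt) √(α² − |u(0,t)|²) is constant in t (on each interval where x₀ + 2εβt has constant sign it equals α, and by continuity it equals α for all t). -/

import Mathlib

/-!
With `c = x₀ + 2εβt` the centre of the soliton, `|u(x,t)|² = α² sech²(α(x - c))`. Its integral
over `(0, ∞)` is `α + α tanh(αc)`, while `α² - |u(0,t)|² = α² tanh²(αc)`, so the square root is
`α |tanh(αc)|`; since `tanh(αc)` has the sign of `c`, the two `tanh` terms cancel.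
-/

open MeasureTheory Filter Topology

namespace Real

lemma hasDerivAt_tanh (x : ℝ) : HasDerivAt tanh (1 / cosh x ^ 2) x := by
  have h := (hasDerivAt_sinh x).div (hasDerivAt_cosh x) (cosh_pos x).ne'
  rw [← sq, ← sq, cosh_sq_sub_sinh_sq] at h
  rwa [show tanh = fun x => sinh x / cosh x from funext tanh_eq_sinh_div_cosh]

lemma tanh_eq_one_sub_exp_div_one_add_exp (x : ℝ) :
    tanh x = (1 - exp (-2 * x)) / (1 + exp (-2 * x)) := by
  have hinv : exp x * exp (-x) = 1 := by rw [← exp_add, add_neg_cancel, exp_zero]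
  rw [tanh_eq, show -2 * x = -x + -x by ring, exp_add]
  field_simp
  linear_combination 2 * exp (-x) * hinv

lemma tendsto_tanh_atTop : Tendsto tanh atTop (𝓝 1) := by
  have hexp : Tendsto (fun x : ℝ => exp (-2 * x)) atTop (𝓝 0) :=
    tendsto_exp_atBot.comp (tendsto_id.const_mul_atTop_of_neg (by norm_num))
  have h := (tendsto_const_nhds (x := (1 : ℝ)).sub hexp).div
    (tendsto_const_nhds (x := (1 : ℝ)).add hexp) (by norm_num)
  rw [funext tanh_eq_one_sub_exp_div_one_add_exp]
  convert h using 2 <;> simp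

lemma tanh_sq (x : ℝ) : tanh x ^ 2 = 1 - 1 / cosh x ^ 2 := by
  have := cosh_pos x
  rw [tanh_eq_sinh_div_cosh, div_pow, cosh_sq]
  field_simp
  ring

lemma tanh_pos_iff {x : ℝ} : 0 < tanh x ↔ 0 < x := by
  rw [tanh_eq_sinh_div_cosh, div_pos_iff_of_pos_right (cosh_pos x), sinh_pos_iff]

lemma tanh_neg_iff {x : ℝ} : tanh x < 0 ↔ x < 0 := by
  rw [← neg_pos, ← tanh_neg, tanh_pos_iff, neg_pos]

lemma sign_mul_abs_tanh_mul {a : ℝ} (ha : 0 < a) (c : ℝ) :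
    sign c * |tanh (a * c)| = tanh (a * c) := by
  rcases lt_trichotomy c 0 with hc | rfl | hc
  · rw [sign_of_neg hc, abs_of_neg (tanh_neg_iff.2 (mul_neg_of_pos_of_neg ha hc))]
    ring
  · simp
  · rw [sign_of_pos hc, abs_of_pos (tanh_pos_iff.2 (mul_pos ha hc)), one_mul]

end Real

open Real

lemma integral_Ioi_sq_div_cosh_sq {a : ℝ} (ha : 0 < a) (c : ℝ) :
    ∫ x in Set.Ioi 0, a ^ 2 / cosh (a * (x - c)) ^ 2 = a + a * tanh (a * c) := by
  have hderiv : ∀ x ∈ Set.Ici (0 : ℝ),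
      HasDerivAt (fun x => a * tanh (a * (x - c))) (a ^ 2 / cosh (a * (x - c)) ^ 2) x := by
    intro x _
    have hlin : HasDerivAt (fun x => a * (x - c)) a x := by
      simpa using ((hasDerivAt_id x).sub_const c).const_mul a
    exact (((hasDerivAt_tanh _).comp x hlin).const_mul a).congr_deriv (by ring)
  have hshift : Tendsto (fun x => a * (x - c)) atTop atTop :=
    (tendsto_atTop_add_const_right _ (-c) tendsto_id).const_mul_atTop ha
  have hlim : Tendsto (fun x => a * tanh (a * (x - c))) atTop (𝓝 (a * 1)) :=
    (tendsto_tanh_atTop.comp hshift).const_mul a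
  rw [integral_Ioi_of_hasDerivAt_of_nonneg' hderiv (fun x _ => by positivity) hlim,
    zero_sub, mul_neg, tanh_neg]
  ring

lemma sqrt_sq_sub_sq_div_cosh_sq {a : ℝ} (ha : 0 ≤ a) (y : ℝ) :
    √(a ^ 2 - a ^ 2 / cosh y ^ 2) = a * |tanh y| := by
  rw [show a ^ 2 - a ^ 2 / cosh y ^ 2 = (a * tanh y) ^ 2 by rw [mul_pow, tanh_sq]; ring,
    sqrt_sq_eq_abs, abs_mul, abs_of_nonneg ha]

noncomputable def oneSoliton (α β φ x₀ ε : ℝ) (x t : ℝ) : ℂ :=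
  (α : ℂ) * Complex.exp (Complex.I * (φ : ℂ)) *
    Complex.exp (Complex.I * (((α : ℂ) ^ 2 - (β : ℂ) ^ 2) * (t : ℂ)) +
      Complex.I * (ε : ℂ) * (β : ℂ) * (x : ℂ)) /
    Complex.cosh ((α : ℂ) * ((x : ℂ) - (x₀ : ℂ) - 2 * (ε : ℂ) * (β : ℂ) * (t : ℂ)))

lemma norm_oneSoliton_sq (α β φ x₀ ε x t : ℝ) :
    ‖oneSoliton α β φ x₀ ε x t‖ ^ 2 = α ^ 2 / cosh (α * (x - (x₀ + 2 * ε * β * t))) ^ 2 := by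
  have hphase : Complex.I * (((α : ℂ) ^ 2 - (β : ℂ) ^ 2) * (t : ℂ)) +
      Complex.I * (ε : ℂ) * (β : ℂ) * (x : ℂ) = (((α ^ 2 - β ^ 2) * t + ε * β * x : ℝ) : ℂ) *
        Complex.I := by
    push_cast; ring
  have hcosh : (α : ℂ) * ((x : ℂ) - (x₀ : ℂ) - 2 * (ε : ℂ) * (β : ℂ) * (t : ℂ)) =
      ((α * (x - (x₀ + 2 * ε * β * t)) : ℝ) : ℂ) := by
    push_cast; ring
  rw [oneSoliton, hphase, hcosh, ← Complex.ofReal_cosh, mul_comm Complex.I (φ : ℂ)]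
  simp only [norm_div, norm_mul, Complex.norm_exp_ofReal_mul_I, Complex.norm_real,
    Real.norm_eq_abs, mul_one, div_pow, sq_abs]

theorem one_soliton_first_conserved_quantity_general (α β φ x₀ ε : ℝ) (hα : 0 < α) (u : ℝ → ℝ → ℂ)
    (hu : ∀ x t : ℝ, u x t =
      (α : ℂ) * Complex.exp (Complex.I * (φ : ℂ)) *
        Complex.exp (Complex.I * (((α : ℂ) ^ 2 - (β : ℂ) ^ 2) * (t : ℂ)) +
          Complex.I * (ε : ℂ) * (β : ℂ) * (x : ℂ)) /
        Complex.cosh ((α : ℂ) * ((x : ℂ) - (x₀ : ℂ) - 2 * (ε : ℂ) * (β : ℂ) * (t : ℂ)))) :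
    ∀ t : ℝ,
      (∫ x in Set.Ioi (0 : ℝ), ‖u x t‖ ^ 2) -
        Real.sign (x₀ + 2 * ε * β * t) *
          Real.sqrt (α ^ 2 - ‖u 0 t‖ ^ 2) = α := by
  obtain rfl : u = oneSoliton α β φ x₀ ε := funext₂ hu
  intro t
  set c := x₀ + 2 * ε * β * t
  simp only [norm_oneSoliton_sq]
  rw [integral_Ioi_sq_div_cosh_sq hα, zero_sub, mul_neg, cosh_neg,
    sqrt_sq_sub_sq_div_cosh_sq hα.le]
  linear_combination (-α) * sign_mul_abs_tanh_mul hα c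

/-- The quantity `I₁(t) = ∫₀^∞ |u(x,t)|² dx − sign(x₀+2εβt) √(α² − |u(0,t)|²)`
is constant in `t` for the one-soliton solution: it equals `α` for all `t`. -/
theorem one_soliton_first_conserved_quantity (α β φ x₀ ε : ℝ) (hα : 0 < α) (hβ : 0 < β)
    (hε : ε = 1 ∨ ε = -1) (u : ℝ → ℝ → ℂ)
    (hu : ∀ x t : ℝ, u x t =
      (α : ℂ) * Complex.exp (Complex.I * (φ : ℂ)) *
        Complex.exp (Complex.I * (((α : ℂ) ^ 2 - (β : ℂ) ^ 2) * (t : ℂ)) +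
          Complex.I * (ε : ℂ) * (β : ℂ) * (x : ℂ)) /
        Complex.cosh ((α : ℂ) * ((x : ℂ) - (x₀ : ℂ) - 2 * (ε : ℂ) * (β : ℂ) * (t : ℂ)))) :
    ∀ t : ℝ,
      (∫ x in Set.Ioi (0 : ℝ), ‖u x t‖ ^ 2) -
        Real.sign (x₀ + 2 * ε * β * t) *
          Real.sqrt (α ^ 2 - ‖u 0 t‖ ^ 2) = α :=
  one_soliton_first_conserved_quantity_general α β φ x₀ ε hα u hu
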